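/- Let L be a linear order, let x, y ∈ L and let n be a positive integer. Then x <^(n) y (i.e., x < y and x ≁_n y) if and only if HR((x, y)) ≥ n, where (x, y) denotes the open interval {z ∈ L | x < z < y}. -/

import Mathlib

universe u v

attribute [local instance] Classical.propDecidable

noncomputable section

namespace PaperHam

/-- The `i`-th projection of a set of tuples. -/
def proj {n : ℕ} {L : Fin n → Type u} (i : Fin n) (S : Set (∀ i, L i)) : Set (L i) :=
  (fun x => x i) '' S

/-- The set of strict lower bounds of `A` within the ambient carrier `K`. -/
def lowerStrictIn {α : Type u} [LT α] (K A : Set α) : Set α := {b ∈ K | ∀ a ∈ A, b < a}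

/-- The set of strict upper bounds of `A` within the ambient carrier `K`. -/
def upperStrictIn {α : Type u} [LT α] (K A : Set α) : Set α := {b ∈ K | ∀ a ∈ A, a < b}

/-- A sub-`n`-clat: a set of tuples coinciding with the product of its projections. -/
def IsSubClat {n : ℕ} {L : Fin n → Type u} (S : Set (∀ i, L i)) : Prop :=
  S = Set.pi Set.univ fun i => proj i S

/-- `H` is an abstract `n`-hammock in the `n`-clat `∏ K i`. -/
def IsHammockIn {n : ℕ} {L : Fin n → Type u} [∀ i, LinearOrder (L i)]
    (K : ∀ i, Set (L i)) (H : Set (∀ i, L i)) : Prop :=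
  ∃ (k : ℕ) (S : Fin (k + 1) → Set (∀ i, L i)),
    (∀ j, IsSubClat (S j)) ∧
    H = ⋃ j, S j ∧
    (∀ i, proj i H = K i) ∧
    (∀ i, (proj i (S 0) ∩ proj i (S (Fin.last k))).Nonempty) ∧
    ∀ (j : Fin k) (i : Fin n),
      lowerStrictIn (K i) (proj i (S j.castSucc)) ∩ proj i (S j.succ) = ∅ ∧
      upperStrictIn (K i) (proj i (S j.castSucc)) ∩
        lowerStrictIn (K i) (proj i (S j.succ)) = ∅ ∧
      proj i (S j.castSucc) ∩ upperStrictIn (K i) (proj i (S j.succ)) = ∅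

/-- `H` is an abstract `n`-hammock in the full `n`-clat `∏ i, L i`. -/
def IsHammock {n : ℕ} {L : Fin n → Type u} [∀ i, LinearOrder (L i)]
    (H : Set (∀ i, L i)) : Prop :=
  IsHammockIn (fun _ => Set.univ) H

/-- A subset of a (pre)ordered type is scattered if it contains no copy of `ℚ`. -/
def IsScatteredSet {α : Type*} [Preorder α] (A : Set α) : Prop :=
  ¬ ∃ f : ℚ → α, StrictMono f ∧ ∀ q, f q ∈ A

/-- An order is scattered if `ℚ` does not order-embed into it. -/
def IsScatteredOrder (α : Type*) [Preorder α] : Prop :=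
  ¬ ∃ f : ℚ → α, StrictMono f

/-- A box in a hammock `H`. -/
def IsBox {n : ℕ} {L : Fin n → Type u} [∀ i, LinearOrder (L i)]
    (H X : Set (∀ i, L i)) : Prop :=
  (∀ i, (proj i X).OrdConnected) ∧ X = H ∩ Set.pi Set.univ fun i => proj i X

/-- A maximal scattered box in `H`. -/
def IsMSB {n : ℕ} {L : Fin n → Type u} [∀ i, LinearOrder (L i)]
    (H X : Set (∀ i, L i)) : Prop :=
  IsBox H X ∧ IsScatteredSet X ∧ ∀ Y, IsBox H Y → IsScatteredSet Y → X ⊆ Y → Y = X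

/-- The scattered condensation class of `x` in the hammock `H`. -/
def condClass {n : ℕ} {L : Fin n → Type u} [∀ i, LinearOrder (L i)]
    (H : Set (∀ i, L i)) (x : ∀ i, L i) : Set (∀ i, L i) :=
  {y ∈ H | IsScatteredSet (H ∩ Set.uIcc x y)}

/-- The scattered condensation class of `x` in a linear order. -/
def condClassLin {α : Type*} [LinearOrder α] (x : α) : Set α :=
  {y | IsScatteredSet (Set.uIcc x y)}

/-- The Hausdorff condensation relation `∼_o` on a linear order. -/
def hrEquiv {α : Type u} [LinearOrder α] (o : Ordinal.{v}) : α → α → Prop :=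
  Ordinal.limitRecOn (motive := fun _ => α → α → Prop) o (fun x y => x = y)
    (fun _ R x y => {s : Set α | ∃ z ∈ Set.uIcc x y, s = {w ∈ Set.uIcc x y | R z w}}.Finite)
    (fun o _ ih x y => ∃ β, ∃ hβ : β < o, ih β hβ x y)

/-- The set of `∼_o`-classes of the linear order `α`. -/
def hrClasses (α : Type u) [LinearOrder α] (o : Ordinal.{u}) : Set (Set α) :=
  {s | ∃ z : α, s = {w | hrEquiv o z w}}

/-- The Hausdorff rank of a linear order: the least ordinal `o` with `α/∼_o` finite,
`⊤ = ∞` if there is none. -/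
def HRrank (α : Type u) [LinearOrder α] : WithTop Ordinal.{u} :=
  if _ : ∃ o : Ordinal.{u}, (hrClasses α o).Finite then
    ((sInf {o : Ordinal.{u} | (hrClasses α o).Finite} : Ordinal.{u}) : WithTop Ordinal.{u})
  else ⊤

/-- The density of a linear order, valued in `{-1} ∪ Ordinal ∪ {∞}`,
encoded as `WithBot (WithTop Ordinal)` (with `⊥ = -1` and `⊤ = ∞`). -/
def density (α : Type u) [LinearOrder α] : WithBot (WithTop Ordinal.{u}) :=
  if _ : ∃ o : Ordinal.{u}, (hrClasses α o).Finite then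
    if Nonempty α then
      (((Ordinal.omega0.{u} * sInf {o : Ordinal.{u} | (hrClasses α o).Finite} +
          (((hrClasses α (sInf {o : Ordinal.{u} | (hrClasses α o).Finite})).ncard - 1 : ℕ) :
            Ordinal.{u}) : Ordinal.{u}) : WithTop Ordinal.{u}) : WithBot (WithTop Ordinal.{u}))
    else ⊥
  else ((⊤ : WithTop Ordinal.{u}) : WithBot (WithTop Ordinal.{u}))

/-- The Hausdorff rank attached to a density value: `∞` if the density is `∞`, and
otherwise the unique ordinal `a` such that the density is `ω·a + p` with `p < ω`. -/
def rankOfDensity (d : WithBot (WithTop Ordinal.{u})) : WithTop Ordinal.{u} :=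
  if h : ∃ o : Ordinal.{u}, d = ((o : WithTop Ordinal.{u}) : WithBot (WithTop Ordinal.{u})) then
    ((h.choose / Ordinal.omega0.{u} : Ordinal.{u}) : WithTop Ordinal.{u})
  else ⊤

/-- A chain in a partial order is linearly ordered. -/
def chainLinearOrder {P : Type u} [PartialOrder P] {A : Set P}
    (h : IsChain (· ≤ ·) A) : LinearOrder ↥A :=
  { (inferInstanceAs (PartialOrder ↥A) : PartialOrder ↥A) with
    le_total := fun a b => by
      rcases eq_or_ne (a : P) (b : P) with hab | hab
      · exact Or.inl (le_of_eq (Subtype.ext hab))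
      · exact (h a.2 b.2 hab).imp Subtype.coe_le_coe.mp Subtype.coe_le_coe.mp
    toDecidableLE := Classical.decRel _ }

/-- The density of a chain in a partial order. -/
def chainDensity {P : Type u} [PartialOrder P] (A : Set P) (h : IsChain (· ≤ ·) A) :
    WithBot (WithTop Ordinal.{u}) :=
  @density ↥A (chainLinearOrder h)

/-- The density of a subset of a partial order: the supremum of the densities of its
chains having a maximum and a minimum. -/
def posetDensitySet {P : Type u} [PartialOrder P] (X : Set P) :
    WithBot (WithTop Ordinal.{u}) :=
  sSup {d | ∃ (A : Set P) (h : IsChain (· ≤ ·) A), A ⊆ X ∧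
    (∃ m ∈ A, ∀ a ∈ A, a ≤ m) ∧ (∃ m ∈ A, ∀ a ∈ A, m ≤ a) ∧ d = chainDensity A h}

/-- A linear order is discrete if every non-maximal element has an immediate successor and
every non-minimal element has an immediate predecessor. -/
def IsDiscreteOrder (α : Type*) [LinearOrder α] : Prop :=
  (∀ x : α, (∃ y, x < y) → ∃ y, x ⋖ y) ∧ ∀ x : α, (∃ y, y < x) → ∃ y, y ⋖ x

/-- `A` is an initial segment (prefix) of `B`. -/
def IsLowerWithin {α : Type*} [Preorder α] (A B : Set α) : Prop :=
  A ⊆ B ∧ ∀ a ∈ A, ∀ b ∈ B, b ≤ a → b ∈ A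

/-- `A` is a final segment (suffix) of `B`. -/
def IsUpperWithin {α : Type*} [Preorder α] (A B : Set α) : Prop :=
  A ⊆ B ∧ ∀ a ∈ A, ∀ b ∈ B, a ≤ b → b ∈ A

/-- A bottom corner of the hammock `H`: a box of `H` which is an `n`-clat such that each
projection is a prefix of the corresponding projection of `H` order-isomorphic to
`L' · ω*` (i.e. `Lex (ℕᵒᵈ × L')`) for some linear order `L'`. -/
def IsBottomCorner {n : ℕ} {L : Fin n → Type u} [∀ i, LinearOrder (L i)]
    (H F : Set (∀ i, L i)) : Prop :=
  IsBox H F ∧ IsSubClat F ∧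
    ∀ i, IsLowerWithin (proj i F) (proj i H) ∧
      ∃ (β : Type u) (_ : LinearOrder β), Nonempty (↥(proj i F) ≃o Lex (ℕᵒᵈ × β))

/-- A top corner of the hammock `H`: a box of `H` which is an `n`-clat such that each
projection is a suffix of the corresponding projection of `H` order-isomorphic to
`L' · ω` (i.e. `Lex (ℕ × L')`) for some linear order `L'`. -/
def IsTopCorner {n : ℕ} {L : Fin n → Type u} [∀ i, LinearOrder (L i)]
    (H F : Set (∀ i, L i)) : Prop :=
  IsBox H F ∧ IsSubClat F ∧
    ∀ i, IsUpperWithin (proj i F) (proj i H) ∧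
      ∃ (β : Type u) (_ : LinearOrder β), Nonempty (↥(proj i F) ≃o Lex (ℕ × β))

/-- `W` is the dot sum `A ∔ B ∔ C` of the three subsets `A`, `B`, `C` of a linear order:
the union is `W`, the maximum of `A` is the minimum of `B`, and the maximum of `B` is the
minimum of `C`. -/
def TripleDotSumEq {α : Type*} [LinearOrder α] (A B C W : Set α) : Prop :=
  W = A ∪ B ∪ C ∧ (∃ x, IsGreatest A x ∧ IsLeast B x) ∧ ∃ y, IsGreatest B y ∧ IsLeast C y

/-- A corner decomposition `(F₋, H₀, F₊)` of the hammock `H`. -/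
def IsCornerDecomp {n : ℕ} {L : Fin n → Type u} [∀ i, LinearOrder (L i)]
    (H Fm H0 Fp : Set (∀ i, L i)) : Prop :=
  IsBottomCorner H Fm ∧ IsTopCorner H Fp ∧ H0 ⊆ H ∧
    IsHammockIn (fun i => proj i H0) H0 ∧
    (∀ i, (∃ m, IsGreatest (proj i H0) m) ∧ ∃ m, IsLeast (proj i H0) m) ∧
    ∀ i, TripleDotSumEq (proj i Fm) (proj i H0) (proj i Fp) (proj i H)

/-- The carrier of the `n`-fold dot sum `L 0 ∔ L 1 ∔ ⋯ ∔ L (n-1)` inside the lexicographic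
sigma type: one removes the minimum of `L i` whenever the dot sum of the preceding
components has a maximum (these two points being identified). -/
def dotSumCarrier {n : ℕ} (L : Fin n → Type u) [∀ i, LinearOrder (L i)] :
    Set (Lex (Σ i, L i)) :=
  {x | ¬ ((∀ b : L (ofLex x).1, (ofLex x).2 ≤ b) ∧
      ∃ j < (ofLex x).1, (∃ m : L j, ∀ b : L j, b ≤ m) ∧
        ∀ k : Fin n, j < k → k < (ofLex x).1 → IsEmpty (L k))}

/-- The carrier of the binary dot sum `α ∔ β` inside `Lex (α ⊕ β)`: the minimum of `β` is
removed (being identified with the maximum of `α`) whenever both exist. -/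
def dotCarrier (α β : Type u) [LinearOrder α] [LinearOrder β] : Set (Lex (α ⊕ β)) :=
  {x | ¬ ((∃ m : α, ∀ a : α, a ≤ m) ∧
      ∃ b : β, (∀ b' : β, b ≤ b') ∧ x = toLex (Sum.inr b))}

/-- The binary dot sum `α ∔ β` of two linear orders. -/
abbrev DotSum (α β : Type u) [LinearOrder α] [LinearOrder β] : Type u := ↥(dotCarrier α β)

/-- The class `LO_fp` of finitely presented linear orders: the smallest class of linear
orders containing the empty and one-element orders, closed under order isomorphism and
under the operations `L ↦ ω·L`, `L ↦ ω*·L` and `(L₁, L₂) ↦ L₁ + L₂`. -/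
inductive IsFinPresLO : ∀ (α : Type u), LinearOrder α → Prop
  | subsingleton (α : Type u) [inst : LinearOrder α] (h : Subsingleton α) :
      IsFinPresLO α inst
  | omegaMul (α : Type u) [inst : LinearOrder α] (h : IsFinPresLO α inst) :
      IsFinPresLO (Lex (α × ℕ)) inferInstance
  | omegaStarMul (α : Type u) [inst : LinearOrder α] (h : IsFinPresLO α inst) :
      IsFinPresLO (Lex (α × ℕᵒᵈ)) inferInstance
  | sum (α β : Type u) [instα : LinearOrder α] [instβ : LinearOrder β]
      (hα : IsFinPresLO α instα) (hβ : IsFinPresLO β instβ) :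
      IsFinPresLO (Lex (α ⊕ β)) inferInstance
  | iso (α β : Type u) [instα : LinearOrder α] [instβ : LinearOrder β]
      (hα : IsFinPresLO α instα) (e : α ≃o β) : IsFinPresLO β instβ





section Aux

variable {α : Type u} [LinearOrder α]

theorem hrEquiv_zero (x y : α) : hrEquiv (0 : Ordinal.{v}) x y ↔ x = y := by
  unfold hrEquiv
  rw [Ordinal.limitRecOn_zero]

theorem hrEquiv_succ (o : Ordinal.{v}) (x y : α) :
    hrEquiv (Order.succ o) x y ↔
      {s : Set α | ∃ z ∈ Set.uIcc x y,
        s = {w ∈ Set.uIcc x y | hrEquiv o z w}}.Finite := by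
  unfold hrEquiv
  rw [Ordinal.limitRecOn_succ]

theorem hrEquiv_natCast_succ (k : ℕ) (x y : α) :
    hrEquiv ((k + 1 : ℕ) : Ordinal.{v}) x y ↔
      {s : Set α | ∃ z ∈ Set.uIcc x y,
        s = {w ∈ Set.uIcc x y | hrEquiv ((k : ℕ) : Ordinal.{v}) z w}}.Finite := by
  rw [Nat.cast_succ, Ordinal.add_one_eq_succ, hrEquiv_succ]

theorem hrEquiv_restrict (k : ℕ) {x y z w : α}
    (hz : z ∈ Set.uIcc x y) (hw : w ∈ Set.uIcc x y)
    (h : hrEquiv ((k : ℕ) : Ordinal.{v}) x y) :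
    hrEquiv ((k : ℕ) : Ordinal.{v}) z w := by
  cases k with
  | zero =>
    rw [Nat.cast_zero, hrEquiv_zero] at h ⊢
    subst h
    simp only [Set.uIcc_self, Set.mem_singleton_iff] at hz hw
    rw [hz, hw]
  | succ k =>
    rw [hrEquiv_natCast_succ] at h ⊢
    have hsub : Set.uIcc z w ⊆ Set.uIcc x y := Set.uIcc_subset_uIcc hz hw
    refine (h.image (· ∩ Set.uIcc z w)).subset ?_
    rintro s ⟨u, hu, rfl⟩
    refine ⟨_, ⟨u, hsub hu, rfl⟩, ?_⟩
    ext v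
    constructor
    · rintro ⟨⟨_, hr⟩, hv⟩
      exact ⟨hv, hr⟩
    · rintro ⟨hv, hr⟩
      exact ⟨⟨hsub hv, hr⟩, hv⟩

theorem hrEquiv_mono_succ (k : ℕ) {x y : α}
    (h : hrEquiv ((k : ℕ) : Ordinal.{v}) x y) :
    hrEquiv ((k + 1 : ℕ) : Ordinal.{v}) x y := by
  rw [hrEquiv_natCast_succ]
  refine (Set.finite_singleton (Set.uIcc x y)).subset ?_
  rintro s ⟨z, hz, rfl⟩
  simp only [Set.mem_singleton_iff]
  ext v
  simp only [Set.mem_setOf_eq]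
  exact ⟨fun h' => h'.1, fun hv => ⟨hv, hrEquiv_restrict k hz hv h⟩⟩

theorem hrEquiv_mono {k l : ℕ} (hkl : k ≤ l) {x y : α}
    (h : hrEquiv ((k : ℕ) : Ordinal.{v}) x y) :
    hrEquiv ((l : ℕ) : Ordinal.{v}) x y := by
  induction l, hkl using Nat.le_induction with
  | base => exact h
  | succ l _ ih => exact hrEquiv_mono_succ l ih

theorem hrEquiv_subtype {S : Set α} (hS : S.OrdConnected) (k : ℕ) (a b : S) :
    hrEquiv ((k : ℕ) : Ordinal.{v}) a b ↔
      hrEquiv ((k : ℕ) : Ordinal.{v}) (a : α) (b : α) := by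
  induction k generalizing a b with
  | zero =>
    rw [Nat.cast_zero, hrEquiv_zero, hrEquiv_zero]
    exact Subtype.ext_iff
  | succ k ih =>
    rw [hrEquiv_natCast_succ, hrEquiv_natCast_succ]
    have hmem : ∀ u v c : S, c ∈ Set.uIcc u v ↔ (c : α) ∈ Set.uIcc (u : α) (v : α) := by
      intro u v c
      simp only [Set.mem_uIcc, ← Subtype.coe_le_coe]
    have himg : ∀ z : S,
        Subtype.val '' {w ∈ Set.uIcc a b | hrEquiv ((k : ℕ) : Ordinal.{v}) z w}
          = {v ∈ Set.uIcc (a : α) (b : α) | hrEquiv ((k : ℕ) : Ordinal.{v}) (z : α) v} := by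
      intro z
      ext v
      simp only [Set.mem_image, Set.mem_setOf_eq]
      constructor
      · rintro ⟨w, ⟨hw, hr⟩, rfl⟩
        exact ⟨(hmem a b w).1 hw, (ih z w).1 hr⟩
      · rintro ⟨hv, hr⟩
        have hvS : v ∈ S := hS.uIcc_subset a.2 b.2 hv
        exact ⟨⟨v, hvS⟩, ⟨(hmem a b ⟨v, hvS⟩).2 hv, (ih z ⟨v, hvS⟩).2 hr⟩, rfl⟩
    have key : {s : Set α | ∃ z ∈ Set.uIcc (a : α) (b : α),
          s = {w ∈ Set.uIcc (a : α) (b : α) | hrEquiv ((k : ℕ) : Ordinal.{v}) z w}}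
        = Set.image Subtype.val ''
          {s : Set S | ∃ z ∈ Set.uIcc a b,
            s = {w ∈ Set.uIcc a b | hrEquiv ((k : ℕ) : Ordinal.{v}) z w}} := by
      ext s
      simp only [Set.mem_setOf_eq, Set.mem_image]
      constructor
      · rintro ⟨z, hz, rfl⟩
        have hzS : z ∈ S := hS.uIcc_subset a.2 b.2 hz
        exact ⟨_, ⟨⟨z, hzS⟩, (hmem a b ⟨z, hzS⟩).2 hz, rfl⟩, himg ⟨z, hzS⟩⟩
      · rintro ⟨t, ⟨z, hz, rfl⟩, rfl⟩
        exact ⟨z, (hmem a b z).1 hz, himg z⟩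
    constructor
    · intro h
      rw [key]
      exact h.image _
    · intro h
      rw [key] at h
      exact h.of_finite_image ((Set.image_injective.2 Subtype.val_injective).injOn)

theorem S1_finite_iff (k : ℕ) {x y : α} (hxy : x < y) :
    {s : Set α | ∃ z ∈ Set.uIcc x y,
        s = {w ∈ Set.uIcc x y | hrEquiv ((k : ℕ) : Ordinal.{v}) z w}}.Finite ↔
    {s : Set α | ∃ z ∈ Set.Ioo x y,
        s = {w ∈ Set.Ioo x y | hrEquiv ((k : ℕ) : Ordinal.{v}) z w}}.Finite := by
  have hIcc : Set.uIcc x y = Set.Icc x y := Set.uIcc_of_le hxy.le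
  have hcases : ∀ v : α, v ∈ Set.uIcc x y ↔ v ∈ Set.Ioo x y ∨ v = x ∨ v = y := by
    intro v
    rw [hIcc, Set.mem_Icc, Set.mem_Ioo]
    constructor
    · rintro ⟨h1, h2⟩
      rcases h1.lt_or_eq with h1 | h1
      · rcases h2.lt_or_eq with h2 | h2
        · exact Or.inl ⟨h1, h2⟩
        · exact Or.inr (Or.inr h2)
      · exact Or.inr (Or.inl h1.symm)
    · rintro (⟨h1, h2⟩ | rfl | rfl)
      exacts [⟨h1.le, h2.le⟩, ⟨le_rfl, hxy.le⟩, ⟨hxy.le, le_rfl⟩]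
  have hIoosub : Set.Ioo x y ⊆ Set.uIcc x y := fun v hv => (hcases v).2 (Or.inl hv)
  constructor
  · intro h
    refine (h.image (· ∩ Set.Ioo x y)).subset ?_
    rintro s ⟨z, hz, rfl⟩
    refine ⟨_, ⟨z, hIoosub hz, rfl⟩, ?_⟩
    ext v
    constructor
    · rintro ⟨⟨_, hr⟩, hv⟩
      exact ⟨hv, hr⟩
    · rintro ⟨hv, hr⟩
      exact ⟨⟨hIoosub hv, hr⟩, hv⟩
  · intro h
    have hfin : ((fun p : Set α × Set α => p.1 ∪ p.2) ''
        ({s : Set α | ∃ z ∈ Set.Ioo x y,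
            s = {w ∈ Set.Ioo x y | hrEquiv ((k : ℕ) : Ordinal.{v}) z w}} ×ˢ
          {t : Set α | t ⊆ ({x, y} : Set α)}) ∪
        {{w ∈ Set.uIcc x y | hrEquiv ((k : ℕ) : Ordinal.{v}) x w},
         {w ∈ Set.uIcc x y | hrEquiv ((k : ℕ) : Ordinal.{v}) y w}}).Finite := by
      refine Set.Finite.union ((Set.Finite.prod h ?_).image _) ?_
      · exact Set.Finite.finite_subsets ((Set.finite_singleton y).insert x)
      · exact (Set.finite_singleton _).insert _
    refine hfin.subset ?_
    rintro s ⟨z, hz, rfl⟩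
    rcases eq_or_ne z x with rfl | hzx
    · exact Or.inr (Set.mem_insert _ _)
    rcases eq_or_ne z y with rfl | hzy
    · exact Or.inr (Set.mem_insert_of_mem _ rfl)
    have hzIoo : z ∈ Set.Ioo x y := by
      rcases (hcases z).1 hz with h' | h' | h'
      · exact h'
      · exact absurd h' hzx
      · exact absurd h' hzy
    left
    refine ⟨({w ∈ Set.Ioo x y | hrEquiv ((k : ℕ) : Ordinal.{v}) z w},
        {w ∈ ({x, y} : Set α) | hrEquiv ((k : ℕ) : Ordinal.{v}) z w}),
      ⟨⟨z, hzIoo, rfl⟩, fun w hw => hw.1⟩, ?_⟩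
    ext v
    simp only [Set.mem_union, Set.mem_setOf_eq, Set.mem_insert_iff, Set.mem_singleton_iff]
    rw [hcases v]
    tauto

theorem hrClasses_Ioo {β : Type u} [LinearOrder β] (k : ℕ) (x y : β) :
    (hrClasses ↥(Set.Ioo x y) ((k : ℕ) : Ordinal.{u})).Finite ↔
    {s : Set β | ∃ z ∈ Set.Ioo x y,
        s = {w ∈ Set.Ioo x y | hrEquiv ((k : ℕ) : Ordinal.{u}) z w}}.Finite := by
  have hS : (Set.Ioo x y).OrdConnected := Set.ordConnected_Ioo
  have himg : ∀ z : ↥(Set.Ioo x y),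
      Subtype.val '' {w : ↥(Set.Ioo x y) | hrEquiv ((k : ℕ) : Ordinal.{u}) z w}
        = {v ∈ Set.Ioo x y | hrEquiv ((k : ℕ) : Ordinal.{u}) (z : β) v} := by
    intro z
    ext v
    simp only [Set.mem_image, Set.mem_setOf_eq]
    constructor
    · rintro ⟨w, hw, rfl⟩
      exact ⟨w.2, (hrEquiv_subtype hS k z w).1 hw⟩
    · rintro ⟨hv, hr⟩
      exact ⟨⟨v, hv⟩, (hrEquiv_subtype hS k z ⟨v, hv⟩).2 hr, rfl⟩
  have key : {s : Set β | ∃ z ∈ Set.Ioo x y,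
        s = {w ∈ Set.Ioo x y | hrEquiv ((k : ℕ) : Ordinal.{u}) z w}}
      = Set.image Subtype.val '' hrClasses ↥(Set.Ioo x y) ((k : ℕ) : Ordinal.{u}) := by
    ext s
    simp only [hrClasses, Set.mem_setOf_eq, Set.mem_image]
    constructor
    · rintro ⟨z, hz, rfl⟩
      exact ⟨_, ⟨⟨z, hz⟩, rfl⟩, himg ⟨z, hz⟩⟩
    · rintro ⟨t, ⟨z, rfl⟩, rfl⟩
      exact ⟨z, z.2, himg z⟩
  constructor
  · intro h
    rw [key]
    exact h.image _
  · intro h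
    rw [key] at h
    exact h.of_finite_image ((Set.image_injective.2 Subtype.val_injective).injOn)

theorem key_iff {β : Type u} [LinearOrder β] (k : ℕ) {x y : β} (hxy : x < y) :
    hrEquiv ((k + 1 : ℕ) : Ordinal.{u}) x y ↔
      (hrClasses ↥(Set.Ioo x y) ((k : ℕ) : Ordinal.{u})).Finite :=
  (hrEquiv_natCast_succ k x y).trans
    ((S1_finite_iff k hxy).trans (hrClasses_Ioo k x y).symm)

theorem natCast_le_HRrank_iff (β : Type u) [LinearOrder β] (n : ℕ) :
    ((n : Ordinal.{u}) : WithTop Ordinal.{u}) ≤ HRrank β ↔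
      ∀ m : ℕ, m < n → ¬ (hrClasses β ((m : ℕ) : Ordinal.{u})).Finite := by
  unfold HRrank
  split_ifs with h
  · rw [WithTop.coe_le_coe]
    constructor
    · intro hle m hm hfin
      have h1 : sInf {o : Ordinal.{u} | (hrClasses β o).Finite} ≤ (m : Ordinal.{u}) :=
        csInf_le' hfin
      have h2 : ((m : ℕ) : Ordinal.{u}) < (n : Ordinal.{u}) := by exact_mod_cast hm
      exact absurd (hle.trans h1) (not_le.2 h2)
    · intro hm
      refine le_csInf h ?_
      intro o ho
      by_contra hlt
      push_neg at hlt
      obtain ⟨m, rfl⟩ := Ordinal.lt_omega0.1 (hlt.trans (Ordinal.nat_lt_omega0 n))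
      exact hm m (by exact_mod_cast hlt) ho
  · push_neg at h
    simp only [le_top, true_iff]
    intro m _
    exact h _

end Aux

/-- for `x, y` in a linear order and `n` a positive integer,
`x <⁽ⁿ⁾ y` iff the Hausdorff rank of the open interval `(x, y)` is at least `n`. -/
theorem statement8 {α : Type u} [LinearOrder α] (x y : α) (n : ℕ) (hn : 0 < n) :
    (x < y ∧ ¬ hrEquiv (n : Ordinal.{u}) x y) ↔
      ((n : Ordinal.{u}) : WithTop Ordinal.{u}) ≤ HRrank ↥(Set.Ioo x y) := by
  rw [natCast_le_HRrank_iff]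
  constructor
  · rintro ⟨hxy, hne⟩ m hm hfin
    exact hne (hrEquiv_mono (show m + 1 ≤ n from hm) ((key_iff m hxy).2 hfin))
  · intro h
    have hxy : x < y := by
      by_contra hxy
      refine h 0 hn ?_
      have he : IsEmpty ↥(Set.Ioo x y) := by
        rw [Set.Ioo_eq_empty hxy]
        exact Set.isEmpty_coe_sort.2 rfl
      have hemp : hrClasses ↥(Set.Ioo x y) ((0 : ℕ) : Ordinal.{u}) = ∅ :=
        Set.eq_empty_of_forall_notMem (by rintro s ⟨z, _⟩; exact he.elim z)
      rw [hemp]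
      exact Set.finite_empty
    obtain ⟨m, rfl⟩ : ∃ m, n = m + 1 := ⟨n - 1, by omega⟩
    exact ⟨hxy, fun hsim => h m (Nat.lt_succ_self m) ((key_iff m hxy).1 hsim)⟩


end PaperHam

end
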